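/- Let k be a field and C a k-linear category equipped with a finite complete set of primitive orthogonal idempotents 𝓘. Then the category of k-linear contravariant functors from C to finite-dimensional k-vector spaces is semisimple and Schurian, and the presheaves (X_ε, ε)^♯ for ε ∈ 𝓘 form a complete set of simples in it (they are pairwise non-isomorphic simple objects, and every simple k-linear presheaf is isomorphic to one of them). -/

import Mathlib

open CategoryTheory CategoryTheory.Limits TensorProduct Opposite

universe v u

section
variable (k : Type v) [Field k] {C : Type u} [Category.{v} C] [Preadditive C]
  [CategoryTheory.Linear k C]

/-- The submodule of `Hom(Y, X)` consisting of maps fixed by postcomposition with the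
idempotent `ε`. -/
def sharpSubmodule (X : C) (ε : X ⟶ X) (Y : C) : Submodule k (Y ⟶ X) where
  carrier := {f | f ≫ ε = f}
  add_mem' := fun {a b} ha hb => by
    simp only [Set.mem_setOf_eq] at *
    rw [Preadditive.add_comp, ha, hb]
  zero_mem' := by simp
  smul_mem' := fun c a ha => by
    simp only [Set.mem_setOf_eq] at *
    rw [CategoryTheory.Linear.smul_comp, ha]

/-- The `k`-linear presheaf `(X, ε)^♯ : Y ↦ {f ∈ Hom(Y, X) | ε ∘ f = f}`, with precomposition
as functorial action. -/
def sharp (X : C) (ε : X ⟶ X) : Cᵒᵖ ⥤ ModuleCat.{v} k where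
  obj Y := ModuleCat.of k (sharpSubmodule k X ε Y.unop)
  map {Y Z} f := ModuleCat.ofHom
    { toFun := fun g => ⟨f.unop ≫ g.1, by
        have hg : (g : Opposite.unop Y ⟶ X) ≫ ε = g := g.2
        show (f.unop ≫ (g : Opposite.unop Y ⟶ X)) ≫ ε = f.unop ≫ (g : Opposite.unop Y ⟶ X)
        rw [Category.assoc, hg]⟩
      map_add' := fun a b => Subtype.ext (by simp [Preadditive.comp_add])
      map_smul' := fun c a => Subtype.ext (by simp [CategoryTheory.Linear.comp_smul]) }
  map_id Y := by
    ext g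
    first | exact Subtype.ext (by simp) | simp | (apply Subtype.ext; simp) | (apply Subtype.ext; simp [ModuleCat.ofHom]) | exact Subtype.ext (Category.id_comp _)
  map_comp f g := by
    ext x
    first | exact Subtype.ext (by simp) | simp | (apply Subtype.ext; simp) | (apply Subtype.ext; simp [ModuleCat.ofHom]) | exact Subtype.ext (Category.assoc _ _ _)

/-- The predicate on presheaves of `k`-modules on `C`, expressing that the presheaf is
`k`-linear (additive and `k`-homogeneous on Hom-spaces) and valued in finite-dimensional
vector spaces. -/
def LinPresheaf (F : Cᵒᵖ ⥤ ModuleCat.{v} k) : Prop :=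
  (∀ {X Y : C} (f g : X ⟶ Y), F.map (f + g).op = F.map f.op + F.map g.op) ∧
  (∀ {X Y : C} (a : k) (f : X ⟶ Y), F.map (a • f).op = a • F.map f.op) ∧
  (∀ Y : Cᵒᵖ, FiniteDimensional k (F.obj Y))

lemma sharp_linPresheaf (X : C) (ε : X ⟶ X) [∀ A B : C, FiniteDimensional k (A ⟶ B)] :
    LinPresheaf k (sharp k X ε) := by
  refine ⟨fun f g => ?_, fun a f => ?_, fun Y => ?_⟩
  · ext x
    refine Subtype.ext ?_
    simp [sharp, Preadditive.add_comp]
    rfl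
  · ext x
    refine Subtype.ext ?_
    simp [sharp, CategoryTheory.Linear.smul_comp]
    rfl
  · exact inferInstanceAs (FiniteDimensional k (sharpSubmodule k X ε Y.unop))

/-- The presheaf `(X, ε)^♯` as an object of the category of `k`-linear presheaves valued in
finite-dimensional vector spaces. -/
def sharpP (X : C) (ε : X ⟶ X) [∀ A B : C, FiniteDimensional k (A ⟶ B)] :
    ObjectProperty.FullSubcategory (LinPresheaf k (C := C)) :=
  ⟨sharp k X ε, sharp_linPresheaf k X ε⟩

/-- `Hom(ε, ε') = {f : X_ε ⟶ X_ε' | ε' ∘ f ∘ ε = f}` as a submodule. -/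
def idemHom {X X' : C} (ε : X ⟶ X) (ε' : X' ⟶ X') : Submodule k (X ⟶ X') where
  carrier := {f | ε ≫ f ≫ ε' = f}
  add_mem' := fun {a b} ha hb => by
    simp only [Set.mem_setOf_eq] at *
    rw [Preadditive.add_comp, Preadditive.comp_add, ha, hb]
  zero_mem' := by simp
  smul_mem' := fun c a ha => by
    simp only [Set.mem_setOf_eq] at *
    rw [CategoryTheory.Linear.smul_comp, CategoryTheory.Linear.comp_smul, ha]

/-- `Hom(A, ε) = {f : A ⟶ X_ε | ε ∘ f = f}` as a submodule. -/
def toIdemHom (A : C) {X : C} (ε : X ⟶ X) : Submodule k (A ⟶ X) :=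
  sharpSubmodule k X ε A

/-- `Hom(ε, B) = {f : X_ε ⟶ B | f ∘ ε = f}` as a submodule. -/
def fromIdemHom {X : C} (ε : X ⟶ X) (B : C) : Submodule k (X ⟶ B) where
  carrier := {f | ε ≫ f = f}
  add_mem' := fun {a b} ha hb => by
    simp only [Set.mem_setOf_eq] at *
    rw [Preadditive.comp_add, ha, hb]
  zero_mem' := by simp
  smul_mem' := fun c a ha => by
    simp only [Set.mem_setOf_eq] at *
    rw [CategoryTheory.Linear.comp_smul, ha]

/-- The composition pairing `Hom(A, ε) ⊗ Hom(ε, B) →ₗ Hom(A, B)`. -/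
noncomputable def idemCompBil (A : C) {X : C} (ε : X ⟶ X) (B : C) :
    toIdemHom k A ε →ₗ[k] (fromIdemHom k ε B →ₗ[k] (A ⟶ B)) :=
  LinearMap.mk₂ k (fun f g => (f : A ⟶ X) ≫ (g : X ⟶ B))
    (fun f f' g => by simp [Preadditive.add_comp])
    (fun a f g => by simp [CategoryTheory.Linear.smul_comp])
    (fun f g g' => by simp [Preadditive.comp_add])
    (fun a f g => by simp [CategoryTheory.Linear.comp_smul])

/-- The total composition map `⊕_{i} Hom(A, ε i) ⊗ Hom(ε i, B) →ₗ Hom(A, B)`. -/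
noncomputable def idemCompTotal (ι : Type) [Fintype ι] [DecidableEq ι] {E : ι → C} (ε : ∀ i, E i ⟶ E i)
    (A B : C) :
    DirectSum ι (fun i => toIdemHom k A (ε i) ⊗[k] fromIdemHom k (ε i) B) →ₗ[k] (A ⟶ B) :=
  DirectSum.toModule k ι _ (fun i => TensorProduct.lift (idemCompBil k A (ε i) B))

end

/-!
For a presheaf `F` let `V_i F = fixedPart F (ε i) = {x ∈ F(E i) | F(ε i) x = x}`. Completeness
writes every `𝟙 A` as a finite sum `∑ f ≫ g` of maps factoring through the `ε i`, so
`x = ∑ F(f) (F(g) x)` and a morphism of presheaves is determined by the linear maps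
`V_i F → V_i G` it induces. Conversely, primitivity and orthogonality say
`Hom(ε i, ε j) = δ_ij k ε i`, so every family of linear maps `V_i F → V_i G` commutes with the
action of these spaces and the same formula turns it into a morphism. The category is thus
equivalent to `∏_i (finite-dimensional k-vector spaces)`, and `(E i, ε i)^♯` corresponds to `k`
in position `i`, because `V_j (E i, ε i)^♯ ≅ Hom(ε j, ε i)`.
-/

abbrev LinPresheafCat (k : Type v) [Field k] (C : Type u) [Category.{v} C] [Preadditive C]
    [CategoryTheory.Linear k C] :=
  ObjectProperty.FullSubcategory (LinPresheaf k (C := C))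

section FixedPart

variable {k : Type v} [Field k] {C : Type u} [Category.{v} C]

lemma map_op_comp_apply (F : Cᵒᵖ ⥤ ModuleCat.{v} k) {A B D : C} (f : A ⟶ B) (g : B ⟶ D)
    (x : F.obj (op D)) : F.map (f ≫ g).op x = F.map f.op (F.map g.op x) := by
  simp

def fixedPart (F : Cᵒᵖ ⥤ ModuleCat.{v} k) {X : C} (e : X ⟶ X) : Submodule k (F.obj (op X)) :=
  LinearMap.eqLocus (F.map e.op).hom LinearMap.id

variable {F G : Cᵒᵖ ⥤ ModuleCat.{v} k} {X Y : C}

lemma mem_fixedPart {e : X ⟶ X} {x : F.obj (op X)} : x ∈ fixedPart F e ↔ F.map e.op x = x :=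
  Iff.rfl

lemma map_mem_fixedPart {e : X ⟶ X} {u : X ⟶ Y} (hu : e ≫ u = u) (y : F.obj (op Y)) :
    F.map u.op y ∈ fixedPart F e := by
  rw [mem_fixedPart, ← map_op_comp_apply, hu]

variable (F) in
def toFixedPart {e : X ⟶ X} {u : X ⟶ Y} (hu : e ≫ u = u) : F.obj (op Y) →ₗ[k] fixedPart F e :=
  (F.map u.op).hom.codRestrict _ (map_mem_fixedPart hu)

@[simp]
lemma coe_toFixedPart {e : X ⟶ X} {u : X ⟶ Y} (hu : e ≫ u = u) (y : F.obj (op Y)) :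
    (toFixedPart F hu y : F.obj (op X)) = F.map u.op y := rfl

def fixedPartMap (η : F ⟶ G) (e : X ⟶ X) : fixedPart F e →ₗ[k] fixedPart G e :=
  (η.app (op X)).hom.restrict fun x hx => by
    rw [mem_fixedPart] at hx ⊢
    rw [← NatTrans.naturality_apply, hx]

end FixedPart

section LinPresheafCat

variable {k : Type v} [Field k] {C : Type u} [Category.{v} C] [Preadditive C]
  [CategoryTheory.Linear k C] {X Y : C}

instance (F : LinPresheafCat k C) : F.obj.Additive where
  map_add {_ _ f g} := F.property.1 f.unop g.unop

lemma LinPresheafCat.map_smul_apply (F : LinPresheafCat k C) (a : k) (f : X ⟶ Y)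
    (y : F.obj.obj (op Y)) : F.obj.map (a • f).op y = a • F.obj.map f.op y := by
  rw [F.property.2.1]
  rfl

lemma LinPresheafCat.map_sum_comp_apply (F : LinPresheafCat k C) {α : Type*} {Y : α → C}
    {Z : C} (s : Finset α) (f : ∀ p, X ⟶ Y p) (g : ∀ p, Y p ⟶ Z) (z : F.obj.obj (op Z)) :
    F.obj.map (∑ p ∈ s, f p ≫ g p).op z =
      ∑ p ∈ s, F.obj.map (f p).op (F.obj.map (g p).op z) := by
  simp [op_sum]

variable {F G H : LinPresheafCat k C}

lemma fixedPartMap_comp_hom (η : F ⟶ G) (θ : G ⟶ H) (e : X ⟶ X) :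
    fixedPartMap (η ≫ θ).hom e = fixedPartMap θ.hom e ∘ₗ fixedPartMap η.hom e := rfl

lemma fixedPartMap_id_hom (e : X ⟶ X) : fixedPartMap (𝟙 F : F ⟶ F).hom e = LinearMap.id := rfl

lemma fixedPartMap_sum_hom {α : Type*} (s : Finset α) (η : α → (F ⟶ G)) (e : X ⟶ X) :
    fixedPartMap (∑ m ∈ s, η m).hom e = ∑ m ∈ s, fixedPartMap (η m).hom e := by
  ext x
  simp [fixedPartMap, ← ObjectProperty.ι_map, Functor.map_sum]

end LinPresheafCat

section Idempotent

variable {k : Type v} [Field k] {C : Type u} [Category.{v} C] [Preadditive C]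
  [CategoryTheory.Linear k C] {X Y : C} {e : X ⟶ X} {e' : Y ⟶ Y}

lemma mem_idemHom {f : X ⟶ Y} : f ∈ idemHom k e e' ↔ e ≫ f ≫ e' = f := Iff.rfl

lemma self_mem_idemHom (he : e ≫ e = e) : e ∈ idemHom k e e := by
  rw [mem_idemHom, he, he]

lemma idem_comp_of_mem_idemHom (he : e ≫ e = e) {f : X ⟶ Y} (hf : f ∈ idemHom k e e') :
    e ≫ f = f := by
  rw [← hf, reassoc_of% he]

lemma comp_idem_of_mem_idemHom (he' : e' ≫ e' = e') {f : X ⟶ Y} (hf : f ∈ idemHom k e e') :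
    f ≫ e' = f := by
  rw [← hf, Category.assoc, Category.assoc, he']

lemma ne_zero_of_finrank_idemHom (h : Module.finrank k (idemHom k e e) = 1) : e ≠ 0 := by
  rintro rfl
  have : idemHom k (0 : X ⟶ X) (0 : X ⟶ X) = ⊥ := eq_bot_iff.mpr fun f hf => by
    simpa using (mem_idemHom.mp hf).symm
  rw [this, finrank_bot] at h
  exact zero_ne_one h

lemma exists_eq_smul_of_mem_idemHom (he : e ≫ e = e) (h : Module.finrank k (idemHom k e e) = 1)
    {f : X ⟶ X} (hf : f ∈ idemHom k e e) : ∃ c : k, f = c • e := by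
  have hne : (⟨e, self_mem_idemHom he⟩ : idemHom k e e) ≠ 0 := fun h0 =>
    ne_zero_of_finrank_idemHom h (congrArg Subtype.val h0)
  obtain ⟨c, hc⟩ := (finrank_eq_one_iff_of_nonzero' _ hne).mp h ⟨f, hf⟩
  exact ⟨c, (congrArg Subtype.val hc).symm⟩

lemma coe_toIdemHom_comp {A : C} (f : toIdemHom k A e) : (f : A ⟶ X) ≫ e = f :=
  f.2

lemma comp_coe_fromIdemHom {B : C} (g : fromIdemHom k e B) : e ≫ (g : X ⟶ B) = g :=
  g.2

end Idempotent

section Sharp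

variable {k : Type v} [Field k] {C : Type u} [Category.{v} C] [Preadditive C]
  [CategoryTheory.Linear k C] [∀ A B : C, FiniteDimensional k (A ⟶ B)] {X Y : C}
  {e : X ⟶ X} {e' : Y ⟶ Y}

def fixedPartSharpEquiv (he : e ≫ e = e) (he' : e' ≫ e' = e') :
    fixedPart (sharpP k Y e').obj e ≃ₗ[k] idemHom k e e' where
  toFun x := ⟨x.1.1, by
    rw [mem_idemHom, x.1.2]
    exact congrArg Subtype.val x.2⟩
  invFun f := ⟨⟨f, comp_idem_of_mem_idemHom he' f.2⟩,
    Subtype.ext (idem_comp_of_mem_idemHom he f.2)⟩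
  map_add' _ _ := rfl
  map_smul' _ _ := rfl
  left_inv _ := rfl
  right_inv _ := rfl

lemma subsingleton_fixedPart_sharp (he : e ≫ e = e) (he' : e' ≫ e' = e')
    (h : idemHom k e e' = ⊥) : Subsingleton (fixedPart (sharpP k Y e').obj e) := by
  have : Subsingleton (idemHom k e e') := by
    rw [h]
    infer_instance
  exact (fixedPartSharpEquiv he he').toEquiv.subsingleton

variable (he : e ≫ e = e)

def sharpGen : fixedPart (sharpP k X e).obj e :=
  (fixedPartSharpEquiv he he).symm ⟨e, self_mem_idemHom he⟩

include he in
lemma finrank_fixedPart_sharp (h : Module.finrank k (idemHom k e e) = 1) :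
    Module.finrank k (fixedPart (sharpP k X e).obj e) = 1 :=
  (fixedPartSharpEquiv he he).finrank_eq.trans h

lemma sharpGen_ne_zero (h : Module.finrank k (idemHom k e e) = 1) :
    sharpGen (k := k) he ≠ 0 := fun h0 =>
  ne_zero_of_finrank_idemHom h (congrArg (fun x => x.1.1) h0)

lemma exists_eq_smul_sharpGen (h : Module.finrank k (idemHom k e e) = 1)
    (x : fixedPart (sharpP k X e).obj e) : ∃ c : k, x = c • sharpGen he := by
  obtain ⟨c, hc⟩ := exists_eq_smul_of_mem_idemHom he h (fixedPartSharpEquiv he he x).2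
  exact ⟨c, (fixedPartSharpEquiv he he).injective (Subtype.ext hc)⟩

lemma linearMap_ext_sharpGen (h : Module.finrank k (idemHom k e e) = 1) {M : Type*}
    [AddCommGroup M] [Module k M] {φ ψ : fixedPart (sharpP k X e).obj e →ₗ[k] M}
    (hφψ : φ (sharpGen he) = ψ (sharpGen he)) : φ = ψ := by
  ext x
  obtain ⟨c, rfl⟩ := exists_eq_smul_sharpGen he h x
  rw [map_smul, map_smul, hφψ]

def sharpLift (F : LinPresheafCat k C) (v : fixedPart F.obj e) : sharpP k X e ⟶ F :=
  ObjectProperty.homMk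
    { app Y := ModuleCat.ofHom
        { toFun g := F.obj.map (g.1 : Y.unop ⟶ X).op v
          map_add' a b := by
            change F.obj.map ((a : Y.unop ⟶ X) + b).op v = _
            rw [op_add, F.obj.map_add]
            rfl
          map_smul' a g := F.map_smul_apply a g.1 v }
      naturality _ _ u := by
        ext g
        exact map_op_comp_apply F.obj u.unop g.1 v }

lemma fixedPartMap_sharpLift_sharpGen (F : LinPresheafCat k C) (v : fixedPart F.obj e) :
    fixedPartMap (sharpLift F v).hom e (sharpGen he) = v :=
  Subtype.ext v.2

end Sharp
section Family

variable {k : Type v} [Field k] {C : Type u} [Category.{v} C] [Preadditive C]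
  [CategoryTheory.Linear k C] {ι : Type} {E : ι → C}
  {ε : ∀ i, E i ⟶ E i} (hidem : ∀ i, ε i ≫ ε i = ε i)
  (hprim : ∀ i, Module.finrank k (idemHom k (ε i) (ε i)) = 1)
  (horth : ∀ i j, i ≠ j → idemHom k (ε i) (ε j) = ⊥)

include hprim horth in
/-- Since `Hom(ε i, ε j)` is `k ε i` for `i = j` and `0` otherwise, every family of linear maps
between the fixed parts is natural with respect to it. -/
lemma fixedPartFamily_naturality {F G : LinPresheafCat k C}
    (φ : ∀ i, fixedPart F.obj (ε i) →ₗ[k] fixedPart G.obj (ε i)) {i j : ι} {h : E i ⟶ E j}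
    (hh : h ∈ idemHom k (ε i) (ε j)) (v : fixedPart F.obj (ε j)) :
    (φ i (toFixedPart F.obj (idem_comp_of_mem_idemHom (hidem i) hh) v) :
      G.obj.obj (op (E i))) = G.obj.map h.op (φ j v) := by
  by_cases hij : i = j
  · subst hij
    obtain ⟨c, rfl⟩ := exists_eq_smul_of_mem_idemHom (hidem i) (hprim i) hh
    have hv : toFixedPart F.obj (idem_comp_of_mem_idemHom (hidem i) hh) v = c • v :=
      Subtype.ext (by rw [coe_toFixedPart, F.map_smul_apply, mem_fixedPart.mp v.2]; rfl)
    rw [hv, map_smul, G.map_smul_apply, (φ i v).2]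
    rfl
  · obtain rfl : h = 0 := by simpa [horth i j hij] using hh
    have hv : toFixedPart F.obj (idem_comp_of_mem_idemHom (hidem i) hh) v = 0 :=
      Subtype.ext (by simp)
    simp [hv]

variable (k ε) in
/-- `⟨i, f, g⟩` stands for the endomorphism `f ≫ g` of `A` factoring through `ε i`. -/
abbrev IdemFactor (A : C) :=
  Σ i, toIdemHom k A (ε i) × fromIdemHom k (ε i) A

variable [Fintype ι] [DecidableEq ι]

lemma exists_sum_comp_eq_id {A : C} (hA : Function.Surjective (idemCompTotal k ι ε A A)) :
    ∃ s : Finset (IdemFactor k ε A),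
      ∑ p ∈ s, (p.2.1 : A ⟶ E p.1) ≫ (p.2.2 : E p.1 ⟶ A) = 𝟙 A := by
  obtain ⟨w, hw⟩ := hA (𝟙 A)
  choose t ht using fun i => TensorProduct.exists_finset (w i)
  refine ⟨Finset.univ.sigma t, ?_⟩
  rw [Finset.sum_sigma, ← hw, ← DirectSum.sum_univ_of w, map_sum]
  refine Finset.sum_congr rfl fun i _ => ?_
  rw [← DirectSum.lof_eq_of k, idemCompTotal, DirectSum.toModule_lof, ht i, map_sum]
  rfl

variable (hsurj : ∀ A, Function.Surjective (idemCompTotal k ι ε A A))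

noncomputable def idDecomp (A : C) : Finset (IdemFactor k ε A) :=
  (exists_sum_comp_eq_id (hsurj A)).choose

lemma sum_idDecomp (A : C) :
    ∑ p ∈ idDecomp hsurj A, (p.2.1 : A ⟶ E p.1) ≫ (p.2.2 : E p.1 ⟶ A) = 𝟙 A :=
  (exists_sum_comp_eq_id (hsurj A)).choose_spec

lemma sum_map_idDecomp (F : LinPresheafCat k C) {A B D : C} (w : B ⟶ A) (w' : A ⟶ D)
    (x : F.obj.obj (op D)) :
    ∑ p ∈ idDecomp hsurj A,
      F.obj.map (w ≫ (p.2.1 : A ⟶ E p.1)).op (F.obj.map ((p.2.2 : E p.1 ⟶ A) ≫ w').op x) =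
      F.obj.map (w ≫ w').op x := by
  rw [← F.map_sum_comp_apply]
  simp_rw [Category.assoc, ← Preadditive.comp_sum, ← Category.assoc, ← Preadditive.sum_comp,
    sum_idDecomp, Category.id_comp]

include hsurj in
lemma hom_ext_of_fixedPartMap {F G : LinPresheafCat k C} {η θ : F ⟶ G}
    (h : ∀ i, fixedPartMap η.hom (ε i) = fixedPartMap θ.hom (ε i)) : η = θ := by
  ext ⟨A⟩ x
  have hx := sum_map_idDecomp hsurj F (𝟙 A) (𝟙 A) x
  simp only [Category.id_comp, Category.comp_id, op_id, F.obj.map_id, ModuleCat.id_apply] at hx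
  rw [← hx, map_sum, map_sum]
  refine Finset.sum_congr rfl fun p _ => ?_
  rw [NatTrans.naturality_apply η.hom (p.2.1 : A ⟶ E p.1).op,
    NatTrans.naturality_apply θ.hom (p.2.1 : A ⟶ E p.1).op]
  exact congrArg _ (congrArg Subtype.val
    (LinearMap.congr_fun (h p.1) (toFixedPart F.obj (comp_coe_fromIdemHom p.2.2) x)))

/-- `x ↦ ∑ G(f) (φ (F(g) x))`, summed over the decomposition `𝟙 A = ∑ f ≫ g` of `idDecomp`. -/
noncomputable def homOfFixedPartMapsApp {F G : LinPresheafCat k C}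
    (φ : ∀ i, fixedPart F.obj (ε i) →ₗ[k] fixedPart G.obj (ε i)) (A : C) :
    F.obj.obj (op A) →ₗ[k] G.obj.obj (op A) :=
  ∑ p ∈ idDecomp hsurj A, (G.obj.map (p.2.1 : A ⟶ E p.1).op).hom ∘ₗ
    (fixedPart G.obj (ε p.1)).subtype ∘ₗ φ p.1 ∘ₗ toFixedPart F.obj (comp_coe_fromIdemHom p.2.2)

include hidem hprim horth in
lemma map_homOfFixedPartMapsApp {F G : LinPresheafCat k C}
    (φ : ∀ i, fixedPart F.obj (ε i) →ₗ[k] fixedPart G.obj (ε i)) {A : C} {j : ι}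
    {u : E j ⟶ A} (hu : ε j ≫ u = u) (x : F.obj.obj (op A)) :
    G.obj.map u.op (homOfFixedPartMapsApp hsurj φ A x) = φ j (toFixedPart F.obj hu x) := by
  have hmem (p : IdemFactor k ε A) : u ≫ (p.2.1 : A ⟶ E p.1) ∈ idemHom k (ε j) (ε p.1) := by
    rw [mem_idemHom, Category.assoc, coe_toIdemHom_comp, reassoc_of% hu]
  have hsum : ∑ p ∈ idDecomp hsurj A,
      toFixedPart F.obj (idem_comp_of_mem_idemHom (hidem j) (hmem p))
        (toFixedPart F.obj (comp_coe_fromIdemHom p.2.2) x) = toFixedPart F.obj hu x := by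
    apply Subtype.ext
    rw [Submodule.coe_sum]
    simpa using sum_map_idDecomp hsurj F u (𝟙 A) x
  rw [← hsum, map_sum, Submodule.coe_sum, homOfFixedPartMapsApp, LinearMap.sum_apply, map_sum]
  refine Finset.sum_congr rfl fun p _ => ?_
  rw [fixedPartFamily_naturality hidem hprim horth φ (hmem p), map_op_comp_apply]
  rfl

include hidem hprim horth in
noncomputable def homOfFixedPartMaps {F G : LinPresheafCat k C}
    (φ : ∀ i, fixedPart F.obj (ε i) →ₗ[k] fixedPart G.obj (ε i)) : F ⟶ G :=
  ObjectProperty.homMk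
    { app A := ModuleCat.ofHom (homOfFixedPartMapsApp hsurj φ A.unop)
      naturality := by
        rintro ⟨A⟩ ⟨B⟩ ⟨w⟩
        ext x
        change homOfFixedPartMapsApp hsurj φ B (F.obj.map w.op x) =
          G.obj.map w.op (homOfFixedPartMapsApp hsurj φ A x)
        have hw (q : IdemFactor k ε B) : ε q.1 ≫ (q.2.2 : E q.1 ⟶ B) ≫ w = q.2.2 ≫ w := by
          rw [← Category.assoc, comp_coe_fromIdemHom]
        have hq (q : IdemFactor k ε B) :
            toFixedPart F.obj (comp_coe_fromIdemHom q.2.2) (F.obj.map w.op x) =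
              toFixedPart F.obj (hw q) x :=
          Subtype.ext (map_op_comp_apply F.obj _ _ x).symm
        rw [homOfFixedPartMapsApp]
        simp only [LinearMap.sum_apply, LinearMap.comp_apply, hq,
          Submodule.subtype_apply, ← map_homOfFixedPartMapsApp hidem hprim horth hsurj φ (hw _)]
        simpa using sum_map_idDecomp hsurj G (𝟙 B) w (homOfFixedPartMapsApp hsurj φ A x) }

lemma fixedPartMap_homOfFixedPartMaps {F G : LinPresheafCat k C}
    (φ : ∀ i, fixedPart F.obj (ε i) →ₗ[k] fixedPart G.obj (ε i)) (i : ι) :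
    fixedPartMap (homOfFixedPartMaps hidem hprim horth hsurj φ).hom (ε i) = φ i := by
  ext v
  have hv : toFixedPart F.obj (hidem i) v = v := Subtype.ext v.2
  calc homOfFixedPartMapsApp hsurj φ (E i) v
      = homOfFixedPartMapsApp hsurj φ (E i) (F.obj.map (ε i).op v) := by rw [mem_fixedPart.mp v.2]
    _ = G.obj.map (ε i).op (homOfFixedPartMapsApp hsurj φ (E i) v) :=
        NatTrans.naturality_apply (homOfFixedPartMaps hidem hprim horth hsurj φ).hom (ε i).op v
    _ = φ i v := by rw [map_homOfFixedPartMapsApp hidem hprim horth hsurj φ (hidem i), hv]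

include hsurj in
lemma mono_of_injective_fixedPartMap {F G : LinPresheafCat k C} (f : F ⟶ G)
    (h : ∀ i, Function.Injective (fixedPartMap f.hom (ε i))) : Mono f :=
  ⟨fun _ _ hgg => hom_ext_of_fixedPartMap hsurj fun i => LinearMap.ext fun x =>
    h i (congrArg (fun t => fixedPartMap t.hom (ε i) x) hgg)⟩

include hidem hprim horth hsurj in
lemma isIso_of_bijective_fixedPartMap {F G : LinPresheafCat k C} (f : F ⟶ G)
    (h : ∀ i, Function.Bijective (fixedPartMap f.hom (ε i))) : IsIso f := by
  let g := homOfFixedPartMaps hidem hprim horth hsurj fun i =>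
    (LinearEquiv.ofBijective _ (h i)).symm.toLinearMap
  refine ⟨g, hom_ext_of_fixedPartMap hsurj fun i => ?_,
    hom_ext_of_fixedPartMap hsurj fun i => ?_⟩ <;>
  · rw [fixedPartMap_comp_hom, fixedPartMap_homOfFixedPartMaps, fixedPartMap_id_hom]
    ext x
    simp

end Family

section Representations

variable {k : Type v} [Field k] {C : Type u} [Category.{v} C] [Preadditive C]
  [CategoryTheory.Linear k C] [∀ A B : C, FiniteDimensional k (A ⟶ B)] {ι : Type}
  {E : ι → C} {ε : ∀ i, E i ⟶ E i} (hidem : ∀ i, ε i ≫ ε i = ε i)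
  (hprim : ∀ i, Module.finrank k (idemHom k (ε i) (ε i)) = 1)
  (horth : ∀ i j, i ≠ j → idemHom k (ε i) (ε j) = ⊥)

include hidem hprim in
lemma sharpP_id_ne_zero (i : ι) : 𝟙 (sharpP k (E i) (ε i)) ≠ 0 := fun h =>
  sharpGen_ne_zero (hidem i) (hprim i) <|
    congrArg (fun η : sharpP k (E i) (ε i) ⟶ sharpP k (E i) (ε i) =>
      fixedPartMap η.hom (ε i) (sharpGen (hidem i))) h

include hidem hprim horth in
lemma injective_fixedPartMap_sharpLift {F : LinPresheafCat k C} {i : ι}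
    {v : fixedPart F.obj (ε i)} (hv : v ≠ 0) (l : ι) :
    Function.Injective (fixedPartMap (sharpLift F v).hom (ε l)) := by
  by_cases hl : l = i
  · subst hl
    refine (injective_iff_map_eq_zero _).mpr fun x hx => ?_
    obtain ⟨c, rfl⟩ := exists_eq_smul_sharpGen (hidem l) (hprim l) x
    rw [map_smul, fixedPartMap_sharpLift_sharpGen, smul_eq_zero] at hx
    rw [hx.resolve_right hv, zero_smul]
  · have := subsingleton_fixedPart_sharp (hidem l) (hidem i) (horth l i hl)
    exact Function.injective_of_subsingleton _

variable [Fintype ι] [DecidableEq ι]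
  (hsurj : ∀ A, Function.Surjective (idemCompTotal k ι ε A A))

include hidem hprim horth hsurj in
lemma sharpP_hom_ext {F : LinPresheafCat k C} {i : ι} {η θ : sharpP k (E i) (ε i) ⟶ F}
    (h : fixedPartMap η.hom (ε i) (sharpGen (hidem i)) =
      fixedPartMap θ.hom (ε i) (sharpGen (hidem i))) : η = θ := by
  refine hom_ext_of_fixedPartMap hsurj fun l => ?_
  by_cases hl : l = i
  · subst hl
    exact linearMap_ext_sharpGen (hidem l) (hprim l) h
  · have := subsingleton_fixedPart_sharp (hidem l) (hidem i) (horth l i hl)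
    exact LinearMap.ext fun x => by rw [Subsingleton.elim x 0, map_zero, map_zero]

include hidem horth hsurj in
lemma hom_sharpP_ext {F : LinPresheafCat k C} {i : ι} {η θ : F ⟶ sharpP k (E i) (ε i)}
    (h : fixedPartMap η.hom (ε i) = fixedPartMap θ.hom (ε i)) : η = θ := by
  refine hom_ext_of_fixedPartMap hsurj fun l => ?_
  by_cases hl : l = i
  · subst hl
    exact h
  · have := subsingleton_fixedPart_sharp (hidem l) (hidem i) (horth l i hl)
    exact LinearMap.ext fun x => Subsingleton.elim _ _

include hidem hprim horth hsurj in
lemma sharpP_hom_eq_zero {i j : ι} (hij : i ≠ j) (η : sharpP k (E i) (ε i) ⟶ sharpP k (E j) (ε j)) :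
    η = 0 :=
  have := subsingleton_fixedPart_sharp (hidem i) (hidem j) (horth i j hij)
  sharpP_hom_ext hidem hprim horth hsurj (Subsingleton.elim _ _)

include hidem hprim horth hsurj in
lemma injective_fixedPartMap_of_mono {F G : LinPresheafCat k C} (f : F ⟶ G) [Mono f] (i : ι) :
    Function.Injective (fixedPartMap f.hom (ε i)) := by
  refine (injective_iff_map_eq_zero _).mpr fun v hv => ?_
  have h0 : sharpLift F v ≫ f = 0 ≫ f := sharpP_hom_ext hidem hprim horth hsurj (by
    rw [zero_comp]
    change fixedPartMap f.hom (ε i)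
      (fixedPartMap (sharpLift F v).hom (ε i) (sharpGen (hidem i))) = 0
    rw [fixedPartMap_sharpLift_sharpGen, hv])
  rw [← fixedPartMap_sharpLift_sharpGen (hidem i) F v, cancel_mono f |>.mp h0]
  rfl

include hidem hprim horth hsurj in
lemma simple_sharpP (i : ι) : Simple (sharpP k (E i) (ε i)) where
  mono_isIso_iff_nonzero {W} f _ := by
    refine ⟨fun _ hf => sharpP_id_ne_zero hidem hprim i ?_, fun hf => ?_⟩
    · exact (IsIso.inv_hom_id f).symm.trans ((congrArg (inv f ≫ ·) hf).trans (comp_zero))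
    have hfi : fixedPartMap f.hom (ε i) ≠ 0 := fun h0 =>
      hf (hom_sharpP_ext hidem horth hsurj h0)
    refine isIso_of_bijective_fixedPartMap hidem hprim horth hsurj f fun l =>
      ⟨injective_fixedPartMap_of_mono hidem hprim horth hsurj f l, ?_⟩
    by_cases hl : l = i
    · subst hl
      exact surjective_of_nonzero_of_finrank_eq_one
        (finrank_fixedPart_sharp (hidem l) (hprim l)) hfi
    · have := subsingleton_fixedPart_sharp (hidem l) (hidem i) (horth l i hl)
      exact fun y => ⟨0, Subsingleton.elim _ _⟩

include hidem hprim horth hsurj in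
lemma eq_of_iso_sharpP {i j : ι} (e : sharpP k (E i) (ε i) ≅ sharpP k (E j) (ε j)) : i = j := by
  by_contra hij
  apply sharpP_id_ne_zero hidem hprim i
  rw [← e.hom_inv_id, sharpP_hom_eq_zero hidem hprim horth hsurj hij e.hom, zero_comp]

include hidem hprim horth hsurj in
lemma exists_iso_sharpP_of_simple (F : LinPresheafCat k C) [Simple F] :
    ∃ i, Nonempty (F ≅ sharpP k (E i) (ε i)) := by
  obtain ⟨i, v, hv⟩ : ∃ i, ∃ v : fixedPart F.obj (ε i), v ≠ 0 := by
    by_contra! h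
    exact id_nonzero F (hom_ext_of_fixedPartMap hsurj fun i =>
      LinearMap.ext fun x => by rw [h i x, map_zero, map_zero])
  have : Mono (sharpLift F v) :=
    mono_of_injective_fixedPartMap hsurj _ (injective_fixedPartMap_sharpLift hidem hprim horth hv)
  have : IsIso (sharpLift F v) := isIso_of_mono_of_nonzero fun h0 => hv (by
    rw [← fixedPartMap_sharpLift_sharpGen (hidem i) F v, h0]
    rfl)
  exact ⟨i, ⟨(asIso (sharpLift F v)).symm⟩⟩

include hidem hprim horth hsurj in
lemma exists_eq_smul_id_sharpP (i : ι) (u : sharpP k (E i) (ε i) ⟶ sharpP k (E i) (ε i)) :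
    ∃ c : k, u = c • 𝟙 _ := by
  obtain ⟨c, hc⟩ := exists_eq_smul_sharpGen (hidem i) (hprim i)
    (fixedPartMap u.hom (ε i) (sharpGen (hidem i)))
  exact ⟨c, sharpP_hom_ext hidem hprim horth hsurj hc⟩

include hidem hprim horth hsurj in
lemma bijective_smul_id_of_simple (F : LinPresheafCat k C) [Simple F] :
    Function.Bijective fun a : k => a • 𝟙 F := by
  refine ⟨smul_left_injective k (id_nonzero F), fun u => ?_⟩
  obtain ⟨i, ⟨e⟩⟩ := exists_iso_sharpP_of_simple hidem hprim horth hsurj F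
  obtain ⟨c, hc⟩ := exists_eq_smul_id_sharpP hidem hprim horth hsurj i (e.inv ≫ u ≫ e.hom)
  refine ⟨c, ?_⟩
  simpa using (congrArg (fun t => e.hom ≫ t ≫ e.inv) hc).symm

noncomputable def sharpProj {F : LinPresheafCat k C} {i : ι}
    (f : fixedPart F.obj (ε i) →ₗ[k] k) : F ⟶ sharpP k (E i) (ε i) :=
  homOfFixedPartMaps hidem hprim horth hsurj (Pi.single i (f.smulRight (sharpGen (hidem i))))

lemma fixedPartMap_sharpProj {F : LinPresheafCat k C} {i : ι}
    (f : fixedPart F.obj (ε i) →ₗ[k] k) (x : fixedPart F.obj (ε i)) :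
    fixedPartMap (sharpProj hidem hprim horth hsurj f).hom (ε i) x = f x • sharpGen (hidem i) := by
  rw [sharpProj, fixedPartMap_homOfFixedPartMaps, Pi.single_eq_same]
  rfl

include hidem hprim horth hsurj in
lemma sharpLift_comp_sharpProj {F : LinPresheafCat k C} {i : ι} (v : fixedPart F.obj (ε i))
    (f : fixedPart F.obj (ε i) →ₗ[k] k) :
    sharpLift F v ≫ sharpProj hidem hprim horth hsurj f = f v • 𝟙 _ := by
  refine sharpP_hom_ext hidem hprim horth hsurj ?_
  rw [fixedPartMap_comp_hom, LinearMap.comp_apply, fixedPartMap_sharpLift_sharpGen,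
    fixedPartMap_sharpProj]
  rfl

include hidem hprim horth hsurj in
lemma sum_sharpProj_comp_sharpLift (F : LinPresheafCat k C) {κ : ι → Type*} [∀ i, Fintype (κ i)]
    (b : ∀ i, Module.Basis (κ i) k (fixedPart F.obj (ε i))) :
    ∑ τ : Σ i, κ i, sharpProj hidem hprim horth hsurj ((b τ.1).coord τ.2) ≫
      sharpLift F (b τ.1 τ.2) = 𝟙 F := by
  refine hom_ext_of_fixedPartMap hsurj fun l => LinearMap.ext fun x => ?_
  rw [fixedPartMap_sum_hom, LinearMap.sum_apply, Fintype.sum_sigma, Finset.sum_eq_single l]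
  · simp_rw [fixedPartMap_comp_hom, LinearMap.comp_apply, fixedPartMap_sharpProj, map_smul,
      fixedPartMap_sharpLift_sharpGen, Module.Basis.coord_apply, fixedPartMap_id_hom,
      LinearMap.id_apply]
    exact (b l).sum_repr x
  · intro i _ hil
    have := subsingleton_fixedPart_sharp (hidem l) (hidem i) (horth l i (Ne.symm hil))
    refine Finset.sum_eq_zero fun t _ => ?_
    rw [fixedPartMap_comp_hom, LinearMap.comp_apply, Subsingleton.elim (fixedPartMap _ _ x) 0,
      map_zero]
  · simp

include hidem hprim horth hsurj in
theorem exists_sharpP_decomposition (F : LinPresheafCat k C) :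
    ∃ (n : ℕ) (i : Fin n → ι) (p : ∀ m, F ⟶ sharpP k (E (i m)) (ε (i m)))
      (s : ∀ m, sharpP k (E (i m)) (ε (i m)) ⟶ F),
      (∀ m, s m ≫ p m = 𝟙 _) ∧ (∀ m l, m ≠ l → s m ≫ p l = 0) ∧ ∑ m, p m ≫ s m = 𝟙 F := by
  have (i : ι) : FiniteDimensional k (fixedPart F.obj (ε i)) := by
    have := F.property.2.2 (op (E i))
    infer_instance
  let b (i : ι) := Module.finBasis k (fixedPart F.obj (ε i))
  let σ := Σ i, Fin (Module.finrank k (fixedPart F.obj (ε i)))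
  let p (τ : σ) := sharpProj hidem hprim horth hsurj ((b τ.1).coord τ.2)
  let s (τ : σ) := sharpLift F (b τ.1 τ.2)
  have hself (τ : σ) : s τ ≫ p τ = 𝟙 _ := by
    rw [sharpLift_comp_sharpProj, Module.Basis.coord_apply, Module.Basis.repr_self,
      Finsupp.single_eq_same, one_smul]
  have hne (τ υ : σ) (h : τ ≠ υ) : s τ ≫ p υ = 0 := by
    obtain ⟨i, t⟩ := τ
    obtain ⟨j, t'⟩ := υ
    by_cases hij : i = j
    · subst hij
      have ht : t ≠ t' := fun ht => h (ht ▸ rfl)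
      rw [sharpLift_comp_sharpProj, Module.Basis.coord_apply, Module.Basis.repr_self,
        Finsupp.single_eq_of_ne ht.symm, zero_smul]
    · exact sharpP_hom_eq_zero hidem hprim horth hsurj hij _
  let e := (Fintype.equivFin σ).symm
  refine ⟨Fintype.card σ, fun m => (e m).1, fun m => p (e m), fun m => s (e m),
    fun m => hself _, fun m l hml => hne _ _ (e.injective.ne hml), ?_⟩
  rw [e.sum_comp (fun τ => p τ ≫ s τ)]
  exact sum_sharpProj_comp_sharpLift hidem hprim horth hsurj F b

end Representations

/-- Let `C` be a `k`-linear category equipped with a finite complete set of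
primitive orthogonal idempotents `ε i ∈ End(E i)`, `i ∈ ι`.  Then the category of `k`-linear
contravariant functors from `C` to finite-dimensional `k`-vector spaces is semisimple and
Schurian, and the presheaves `(E i, ε i)^♯` form a complete set of simples in it. -/
theorem stmt_6 (k : Type v) [Field k] (C : Type u) [Category.{v} C] [Preadditive C]
    [CategoryTheory.Linear k C] [∀ X Y : C, FiniteDimensional k (X ⟶ Y)]
    -- the finite set `𝓘` of idempotents
    (ι : Type) [Fintype ι] [DecidableEq ι] (E : ι → C) (ε : ∀ i, E i ⟶ E i)
    (hidem : ∀ i, ε i ≫ ε i = ε i)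
    -- primitive and orthogonal
    (hprim : ∀ i, Module.finrank k (idemHom k (ε i) (ε i)) = 1)
    (horth : ∀ i j, i ≠ j → idemHom k (ε i) (ε j) = ⊥)
    -- complete
    (hcomplete : ∀ A B : C, Function.Bijective (idemCompTotal k ι ε A B)) :
    -- the `(E i, ε i)^♯` are pairwise non-isomorphic simple objects
    (∀ i, Simple (sharpP k (E i) (ε i))) ∧
    (∀ i j, Nonempty (sharpP k (E i) (ε i) ≅ sharpP k (E j) (ε j)) → i = j) ∧
    -- every simple object is isomorphic to one of them
    (∀ F : ObjectProperty.FullSubcategory (LinPresheaf k (C := C)),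
      Simple F → ∃ i, Nonempty (F ≅ sharpP k (E i) (ε i))) ∧
    -- the category of representations is Schurian
    (∀ F : ObjectProperty.FullSubcategory (LinPresheaf k (C := C)),
      Simple F → Function.Bijective fun a : k => a • (𝟙 F)) ∧
    -- and semisimple: every object is a finite direct sum of simple objects
    (∀ F : ObjectProperty.FullSubcategory (LinPresheaf k (C := C)),
      ∃ (n : ℕ) (G : Fin n → ObjectProperty.FullSubcategory (LinPresheaf k (C := C)))
        (p : ∀ m, F ⟶ G m) (s : ∀ m, G m ⟶ F),
        (∀ m, Simple (G m)) ∧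
        (∀ m, s m ≫ p m = 𝟙 (G m)) ∧
        (∀ m l, m ≠ l → s m ≫ p l = 0) ∧
        (∑ m, p m ≫ s m) = 𝟙 F) := by
  have hsurj A := (hcomplete A A).2
  refine ⟨simple_sharpP hidem hprim horth hsurj,
    fun i j ⟨e⟩ => eq_of_iso_sharpP hidem hprim horth hsurj e,
    fun F _ => exists_iso_sharpP_of_simple hidem hprim horth hsurj F,
    fun F _ => bijective_smul_id_of_simple hidem hprim horth hsurj F, fun F => ?_⟩
  obtain ⟨n, i, p, s, hsp, hsp_ne, hps⟩ := exists_sharpP_decomposition hidem hprim horth hsurj F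
  exact ⟨n, _, p, s, fun m => simple_sharpP hidem hprim horth hsurj (i m), hsp, hsp_ne, hps⟩
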